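/- arXiv:2204.00953 — 5 statements merged into one kernel-verified Lean document; each statement's English description precedes it below -/
import Mathlib

section
/- Let β > σ > δ > 0, ω > δ, γ > 0. Since γβ > 0 > (δ−ω)(σ−δ), there exists exactly one solution I in the open interval (0,1) of the quadratic equation δ(β−δ)I² − bI + (β−σ)ω = 0 where b = γβ + ω(β−δ) + δ(β−σ), namely I = (b − √Δ)/(2δ(β−δ)) with Δ = b² − 4δω(β−δ)(β−σ). -/
/-!
With `f x = a x² - b x + c`, `a = δ(β - δ) > 0`, the quadratic has `f 0 = c > 0` and
`f 1 = -γβ - (ω - δ)(σ - δ) < 0`. A sign change on `[0, 1]` with positive leading coefficient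
forces the smaller root `(b - √Δ)/(2a)` into `(0, 1)` and the larger root `(b + √Δ)/(2a)` beyond
`1`, so the root in `(0, 1)` is unique.
-/

open Real Set

section Quadratic

variable {a b c : ℝ}

-- `(b - 2a)² = b² - 4a(b - a)` and `c < b - a`.
lemma abs_sub_two_mul_lt_sqrt_discrim (ha : 0 < a) (hf1 : a - b + c < 0) :
    |b - 2 * a| < √(b ^ 2 - 4 * a * c) :=
  (lt_sqrt (abs_nonneg _)).2 (by rw [sq_abs]; nlinarith)

lemma sqrt_discrim_lt (hb : 0 < b) (hac : 0 < a * c) : √(b ^ 2 - 4 * a * c) < b :=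
  (sqrt_lt' hb).2 (by linarith)

lemma quadratic_eq_zero_iff_sub_or_add (ha : 0 < a) (hd : 0 ≤ b ^ 2 - 4 * a * c) (x : ℝ) :
    a * x ^ 2 - b * x + c = 0 ↔
      x = (b - √(b ^ 2 - 4 * a * c)) / (2 * a) ∨ x = (b + √(b ^ 2 - 4 * a * c)) / (2 * a) := by
  have hdiscrim : discrim a (-b) c = √(b ^ 2 - 4 * a * c) * √(b ^ 2 - 4 * a * c) := by
    rw [mul_self_sqrt hd, discrim, neg_sq]
  rw [show a * x ^ 2 - b * x + c = a * (x * x) + -b * x + c by ring,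
    quadratic_eq_zero_iff ha.ne' hdiscrim, neg_neg, or_comm]

lemma quadratic_smaller_root_mem_Ioo (ha : 0 < a) (hc : 0 < c) (hf1 : a - b + c < 0) :
    (b - √(b ^ 2 - 4 * a * c)) / (2 * a) ∈ Ioo 0 1 := by
  have hb : 0 < b := by linarith
  refine ⟨div_pos (sub_pos.2 (sqrt_discrim_lt hb (mul_pos ha hc))) (by positivity), ?_⟩
  rw [div_lt_one (by positivity)]
  linarith [le_abs_self (b - 2 * a), abs_sub_two_mul_lt_sqrt_discrim ha hf1]

lemma one_lt_quadratic_larger_root (ha : 0 < a) (hf1 : a - b + c < 0) :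
    1 < (b + √(b ^ 2 - 4 * a * c)) / (2 * a) := by
  rw [one_lt_div (by positivity)]
  linarith [neg_abs_le (b - 2 * a), abs_sub_two_mul_lt_sqrt_discrim ha hf1]

theorem quadratic_eq_zero_and_mem_Ioo_iff (ha : 0 < a) (hc : 0 < c) (hf1 : a - b + c < 0)
    (x : ℝ) :
    x ∈ Ioo 0 1 ∧ a * x ^ 2 - b * x + c = 0 ↔ x = (b - √(b ^ 2 - 4 * a * c)) / (2 * a) := by
  have hd : 0 < b ^ 2 - 4 * a * c :=
    sqrt_pos.1 ((abs_nonneg _).trans_lt (abs_sub_two_mul_lt_sqrt_discrim ha hf1))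
  constructor
  · rintro ⟨⟨-, hx1⟩, hx⟩
    refine ((quadratic_eq_zero_iff_sub_or_add ha hd.le x).1 hx).resolve_right ?_
    rintro rfl
    exact hx1.not_gt (one_lt_quadratic_larger_root ha hf1)
  · rintro rfl
    exact ⟨quadratic_smaller_root_mem_Ioo ha hc hf1,
      (quadratic_eq_zero_iff_sub_or_add ha hd.le _).2 (Or.inl rfl)⟩

end Quadratic

theorem sirs_unique_endemic_root
    (β σ δ ω γ : ℝ) (hβσ : β > σ) (hσδ : σ > δ) (hδ : δ > 0)
    (hωδ : ω > δ) (hγ : γ > 0) :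
    (∃! I : ℝ, I ∈ Set.Ioo (0 : ℝ) 1 ∧
      δ * (β - δ) * I ^ 2 - (γ * β + ω * (β - δ) + δ * (β - σ)) * I
        + (β - σ) * ω = 0) ∧
    (((γ * β + ω * (β - δ) + δ * (β - σ))
        - Real.sqrt ((γ * β + ω * (β - δ) + δ * (β - σ)) ^ 2
            - 4 * δ * ω * (β - δ) * (β - σ))) / (2 * δ * (β - δ))
       ∈ Set.Ioo (0 : ℝ) 1 ∧
     δ * (β - δ) * (((γ * β + ω * (β - δ) + δ * (β - σ))
        - Real.sqrt ((γ * β + ω * (β - δ) + δ * (β - σ)) ^ 2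
            - 4 * δ * ω * (β - δ) * (β - σ))) / (2 * δ * (β - δ))) ^ 2
       - (γ * β + ω * (β - δ) + δ * (β - σ))
          * (((γ * β + ω * (β - δ) + δ * (β - σ))
            - Real.sqrt ((γ * β + ω * (β - δ) + δ * (β - σ)) ^ 2
                - 4 * δ * ω * (β - δ) * (β - σ))) / (2 * δ * (β - δ)))
       + (β - σ) * ω = 0) := by
  have ha : 0 < δ * (β - δ) := mul_pos hδ (by linarith)
  have hc : 0 < (β - σ) * ω := mul_pos (by linarith) (by linarith)
  have hf1 : δ * (β - δ) - (γ * β + ω * (β - δ) + δ * (β - σ)) + (β - σ) * ω < 0 := by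
    have hγβ : 0 < γ * β := mul_pos hγ (by linarith)
    have hωσ : 0 < (ω - δ) * (σ - δ) := mul_pos (by linarith) (by linarith)
    linarith
  have hroot := quadratic_eq_zero_and_mem_Ioo_iff ha hc hf1
  rw [show 4 * δ * ω * (β - δ) * (β - σ) = 4 * (δ * (β - δ)) * ((β - σ) * ω) by ring,
    show 2 * δ * (β - δ) = 2 * (δ * (β - δ)) by ring]
  exact ⟨⟨_, (hroot _).2 rfl, fun x hx ↦ (hroot x).1 hx⟩, (hroot _).2 rfl⟩
end

section
/- Let β* > δ > 0, ω > δ, γ > 0, and let (I*, R*) be an equilibrium satisfying β* − σ = β*(I*+R*) − δI* and 0 = γI* − ωR* + δR*I*, with I* > 0, R* ≥ 0. Define a = β*/(γ + δR*) and V(I,R) = (I − I*) + I* ln(I*/I) + (a/2)(R − R*)². Then along solutions of İ = (β*(R*−R) + (β*−δ)(I*−I))I, Ṙ = (γ+δR*)(I−I*) − (ω−δI)(R−R*), the derivative of V equals −(β*−δ)(I−I*)² − a(ω−δI)(R−R*)². -/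
/-! The Volterra term `I - I* + I* ln (I*/I)` differentiates along `İ = I g` to `(I - I*) g`, and the
quadratic term `(a/2)(R - R*)²` to `a (R - R*) Ṙ`. The choice `a = β*/(γ + δR*)` makes the two
cross terms in `(I - I*)(R - R*)` cancel, leaving the two negative squares. -/

theorem hasDerivAt_volterra {f : ℝ → ℝ} {r c t : ℝ} (hf : HasDerivAt f (r * f t) t)
    (hft : f t ≠ 0) (hc : c ≠ 0) :
    HasDerivAt (fun s => (f s - c) + c * Real.log (c / f s)) ((f t - c) * r) t := by
  have hlog : HasDerivAt (fun s => Real.log (c / f s))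
      ((0 * f t - c * (r * f t)) / f t ^ 2 / (c / f t)) t :=
    ((hasDerivAt_const t c).div hf hft).log (div_ne_zero hc hft)
  refine ((hf.sub_const c).add (hlog.const_mul c)).congr_deriv ?_
  field_simp
  ring

theorem hasDerivAt_half_mul_sq_sub {g : ℝ → ℝ} {g' k r t : ℝ} (hg : HasDerivAt g g' t) :
    HasDerivAt (fun s => k / 2 * (g s - r) ^ 2) (k * (g t - r) * g') t := by
  refine (((hg.sub_const r).pow 2).const_mul (k / 2)).congr_deriv ?_
  ring

theorem sirs_lyapunov_derivative_general
    (βs δ ω γ Istar Rstar : ℝ)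
    (hδ : δ > 0) (hγ : γ > 0)
    (hIs : Istar > 0) (hRs : Rstar ≥ 0)
    (I R : ℝ → ℝ) (t : ℝ) (hIpos : I t > 0)
    (hI : HasDerivAt I ((βs * (Rstar - R t) + (βs - δ) * (Istar - I t)) * I t) t)
    (hR : HasDerivAt R ((γ + δ * Rstar) * (I t - Istar)
            - (ω - δ * I t) * (R t - Rstar)) t) :
    HasDerivAt
      (fun s => (I s - Istar) + Istar * Real.log (Istar / I s)
        + (βs / (γ + δ * Rstar) / 2) * (R s - Rstar) ^ 2)
      (-(βs - δ) * (I t - Istar) ^ 2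
        - (βs / (γ + δ * Rstar)) * (ω - δ * I t) * (R t - Rstar) ^ 2) t := by
  have hcancel : βs / (γ + δ * Rstar) * (γ + δ * Rstar) = βs :=
    div_mul_cancel₀ βs (by positivity)
  refine ((hasDerivAt_volterra hI hIpos.ne' hIs.ne').add
    (hasDerivAt_half_mul_sq_sub (k := βs / (γ + δ * Rstar)) hR)).congr_deriv ?_
  linear_combination (R t - Rstar) * (I t - Istar) * hcancel

theorem sirs_lyapunov_derivative
    (βs σ δ ω γ Istar Rstar : ℝ)
    (hβδ : βs > δ) (hδ : δ > 0) (hωδ : ω > δ) (hγ : γ > 0)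
    (hIs : Istar > 0) (hRs : Rstar ≥ 0)
    (heq1 : βs - σ = βs * (Istar + Rstar) - δ * Istar)
    (heq2 : 0 = γ * Istar - ω * Rstar + δ * Rstar * Istar)
    (I R : ℝ → ℝ) (t : ℝ) (hIpos : I t > 0)
    (hI : HasDerivAt I ((βs * (Rstar - R t) + (βs - δ) * (Istar - I t)) * I t) t)
    (hR : HasDerivAt R ((γ + δ * Rstar) * (I t - Istar)
            - (ω - δ * I t) * (R t - Rstar)) t) :
    HasDerivAt
      (fun s => (I s - Istar) + Istar * Real.log (Istar / I s)
        + (βs / (γ + δ * Rstar) / 2) * (R s - Rstar) ^ 2)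
      (-(βs - δ) * (I t - Istar) ^ 2
        - (βs / (γ + δ * Rstar)) * (ω - δ * I t) * (R t - Rstar) ^ 2) t :=
  sirs_lyapunov_derivative_general βs δ ω γ Istar Rstar hδ hγ hIs hRs I R t hIpos hI hR
end

section
/- Let n ≥ 2, β ∈ ℝⁿ with β₁ < β₂ < ⋯ < βₙ, and c̃ ∈ ℝⁿ with c̃₁ > c̃₂ > ⋯ > c̃ₙ = 0, satisfying (c̃ᵢ − c̃ᵢ₊₁)/(βᵢ₊₁ − βᵢ) > (c̃ᵢ₊₁ − c̃ᵢ₊₂)/(βᵢ₊₂ − βᵢ₊₁) for 1 ≤ i ≤ n−2. Let c* satisfy c̃_{i*+1} < c* < c̃_{i*} for some index i*. Then the vector x* defined by x*_{i*} = (c* − c̃_{i*+1})/(c̃_{i*} − c̃_{i*+1}), x*_{i*+1} = 1 − x*_{i*}, and all other entries zero, is the unique minimizer of β'x over the simplex {x ∈ [0,1]ⁿ : Σxᵢ = 1} subject to c̃'x ≤ c*. -/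
/-!
Let `s` be the marginal cost `(c̃ᵢ* − c̃ᵢ*₊₁) / (βᵢ*₊₁ − βᵢ*)` and `L j = βⱼ + s⁻¹ c̃ⱼ`, so that `L`
takes the same value `μ` at `i*` and `i* + 1`. The increment `L (i + 1) − L i` has the sign of
`s − sᵢ`, where `sᵢ` is the marginal cost between strategies `i` and `i + 1`; as the `sᵢ` decrease
strictly, `L` decreases strictly up to `i*`, increases strictly from `i* + 1` on, and `L > μ` off
these two indices. Hence every feasible `x` has
`β'x = ∑ⱼ (Lⱼ − μ) xⱼ + s⁻¹ (c* − c̃'x) + μ − s⁻¹ c* ≥ μ − s⁻¹ c*`,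
with equality exactly when `x` is supported on `{i*, i* + 1}` and spends the whole budget;
these two linear conditions pin down `x*`.
-/

namespace Fin

variable {α : Type*} [Preorder α] {m : ℕ}

theorem strictAnti_of_val_succ_lt {g : Fin m → α}
    (h : ∀ i (hi : i + 1 < m), g ⟨i + 1, hi⟩ < g ⟨i, Nat.lt_of_succ_lt hi⟩) : StrictAnti g := by
  cases m with
  | zero => exact fun i => i.elim0
  | succ m => exact strictAnti_iff_succ_lt.2 fun i => h i i.succ.is_lt

theorem apply_castSucc_lt_of_unimodal {f : Fin (m + 1) → α} {a : Fin m}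
    (hdec : ∀ i : Fin m, i < a → f i.succ < f i.castSucc)
    (hinc : ∀ i : Fin m, a < i → f i.castSucc < f i.succ)
    (heq : f a.castSucc = f a.succ) {j : Fin (m + 1)}
    (hja : j ≠ a.castSucc) (hjb : j ≠ a.succ) : f a.castSucc < f j := by
  rcases lt_or_ge j a.castSucc with hj | hj
  · refine strictAntiOn_Iic_of_succ_lt (ψ := f) (fun k hk => ?_) (Set.mem_Iic.2 hj.le)
      Set.self_mem_Iic hj
    obtain ⟨i, rfl⟩ := exists_castSucc_eq.2 (ne_last_of_lt hk)
    rw [orderSucc_castSucc]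
    exact hdec i (castSucc_lt_castSucc_iff.1 hk)
  · have hj : a.succ < j :=
      (castSucc_lt_iff_succ_le.1 (hj.lt_of_ne hja.symm)).lt_of_ne hjb.symm
    rw [heq]
    refine strictMonoOn_Ici_of_pred_lt (ψ := f) (fun k hk => ?_) Set.self_mem_Ici
      (Set.mem_Ici.2 hj.le) hj
    obtain ⟨i, rfl⟩ := exists_succ_eq.2 (ne_zero_of_lt hk)
    rw [orderPred_succ]
    exact hinc i (succ_lt_succ_iff.1 hk)

end Fin

def lagrangian {ι : Type*} (β c : ι → ℝ) (l : ℝ) (i : ι) : ℝ := β i + l * c i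

section MarginalCost

variable {m : ℕ} {β c : Fin (m + 1) → ℝ}

-- Assumption 3 of the paper says that this is strictly antitone.
noncomputable def marginalCost (β c : Fin (m + 1) → ℝ) (i : Fin m) : ℝ :=
  (c i.castSucc - c i.succ) / (β i.succ - β i.castSucc)

theorem marginalCost_pos (hβ : StrictMono β) (hc : StrictAnti c) (i : Fin m) :
    0 < marginalCost β c i :=
  div_pos (sub_pos.2 (hc i.castSucc_lt_succ)) (sub_pos.2 (hβ i.castSucc_lt_succ))

theorem lagrangian_succ_lt_iff (hβ : StrictMono β) {s : ℝ} (hs : 0 < s) (i : Fin m) :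
    lagrangian β c s⁻¹ i.succ < lagrangian β c s⁻¹ i.castSucc ↔ s < marginalCost β c i := by
  have key : lagrangian β c s⁻¹ i.castSucc - lagrangian β c s⁻¹ i.succ =
      s⁻¹ * (c i.castSucc - c i.succ - s * (β i.succ - β i.castSucc)) := by
    simp only [lagrangian]
    field_simp
    ring
  rw [marginalCost, lt_div_iff₀ (sub_pos.2 (hβ i.castSucc_lt_succ)), ← sub_pos, key,
    mul_pos_iff_of_pos_left (inv_pos.2 hs), sub_pos]

theorem lagrangian_lt_succ_iff (hβ : StrictMono β) {s : ℝ} (hs : 0 < s) (i : Fin m) :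
    lagrangian β c s⁻¹ i.castSucc < lagrangian β c s⁻¹ i.succ ↔ marginalCost β c i < s := by
  have key : lagrangian β c s⁻¹ i.succ - lagrangian β c s⁻¹ i.castSucc =
      s⁻¹ * (s * (β i.succ - β i.castSucc) - (c i.castSucc - c i.succ)) := by
    simp only [lagrangian]
    field_simp
    ring
  rw [marginalCost, div_lt_iff₀ (sub_pos.2 (hβ i.castSucc_lt_succ)), ← sub_pos, key,
    mul_pos_iff_of_pos_left (inv_pos.2 hs), sub_pos]

theorem lagrangian_castSucc_eq_succ {i : Fin m} (hc : c i.castSucc ≠ c i.succ) :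
    lagrangian β c (marginalCost β c i)⁻¹ i.castSucc =
      lagrangian β c (marginalCost β c i)⁻¹ i.succ := by
  rw [lagrangian, lagrangian, marginalCost, inv_div]
  field_simp [sub_ne_zero.2 hc]
  ring

variable (hβ : StrictMono β) (hc : StrictAnti c) (hslope : StrictAnti (marginalCost β c))
  (a : Fin m)
include hβ hc hslope

theorem lagrangian_castSucc_lt {j : Fin (m + 1)} (hja : j ≠ a.castSucc) (hjb : j ≠ a.succ) :
    lagrangian β c (marginalCost β c a)⁻¹ a.castSucc <
      lagrangian β c (marginalCost β c a)⁻¹ j := by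
  have hs := marginalCost_pos hβ hc a
  exact Fin.apply_castSucc_lt_of_unimodal
    (fun i hi => (lagrangian_succ_lt_iff hβ hs i).2 (hslope hi))
    (fun i hi => (lagrangian_lt_succ_iff hβ hs i).2 (hslope hi))
    (lagrangian_castSucc_eq_succ (hc a.castSucc_lt_succ).ne') hja hjb

theorem lagrangian_eq_castSucc_iff (j : Fin (m + 1)) :
    lagrangian β c (marginalCost β c a)⁻¹ j = lagrangian β c (marginalCost β c a)⁻¹ a.castSucc ↔
      j = a.castSucc ∨ j = a.succ := by
  refine ⟨fun h => ?_, ?_⟩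
  · by_contra! hj
    exact (lagrangian_castSucc_lt hβ hc hslope a hj.1 hj.2).ne' h
  · rintro (rfl | rfl)
    · rfl
    · exact (lagrangian_castSucc_eq_succ (hc a.castSucc_lt_succ).ne').symm

theorem lagrangian_castSucc_le (j : Fin (m + 1)) :
    lagrangian β c (marginalCost β c a)⁻¹ a.castSucc ≤ lagrangian β c (marginalCost β c a)⁻¹ j :=
  if hj : j = a.castSucc ∨ j = a.succ then
    ((lagrangian_eq_castSucc_iff hβ hc hslope a j).2 hj).ge
  else (lagrangian_castSucc_lt hβ hc hslope a (not_or.1 hj).1 (not_or.1 hj).2).le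

end MarginalCost

section WeakDuality

open Finset

variable {ι : Type*} [Fintype ι] {β c x : ι → ℝ} {l μ C : ℝ}

theorem sum_mul_eq_lagrangian (hx : ∑ i, x i = 1) :
    ∑ i, β i * x i =
      ∑ i, (lagrangian β c l i - μ) * x i + l * (C - ∑ i, c i * x i) + (μ - l * C) := by
  simp only [lagrangian, sub_mul, add_mul, sum_sub_distrib, sum_add_distrib, ← mul_sum,
    mul_assoc, hx]
  ring

theorem sub_mul_le_sum_mul (hl : 0 ≤ l) (hf : ∀ i, μ ≤ lagrangian β c l i)
    (hx0 : ∀ i, 0 ≤ x i) (hx1 : ∑ i, x i = 1) (hxc : ∑ i, c i * x i ≤ C) :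
    μ - l * C ≤ ∑ i, β i * x i := by
  rw [sum_mul_eq_lagrangian (l := l) (c := c) (μ := μ) (C := C) hx1]
  have h1 : 0 ≤ ∑ i, (lagrangian β c l i - μ) * x i :=
    sum_nonneg fun i _ => mul_nonneg (sub_nonneg.2 (hf i)) (hx0 i)
  have h2 : 0 ≤ l * (C - ∑ i, c i * x i) := mul_nonneg hl (sub_nonneg.2 hxc)
  linarith

theorem sum_mul_eq_sub_mul_iff (hl : 0 < l) (hf : ∀ i, μ ≤ lagrangian β c l i)
    (hx0 : ∀ i, 0 ≤ x i) (hx1 : ∑ i, x i = 1) (hxc : ∑ i, c i * x i ≤ C) :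
    ∑ i, β i * x i = μ - l * C ↔
      ∑ i, c i * x i = C ∧ ∀ i, x i ≠ 0 → lagrangian β c l i = μ := by
  have h1 : ∀ i ∈ univ, 0 ≤ (lagrangian β c l i - μ) * x i :=
    fun i _ => mul_nonneg (sub_nonneg.2 (hf i)) (hx0 i)
  have h2 : 0 ≤ l * (C - ∑ i, c i * x i) := mul_nonneg hl.le (sub_nonneg.2 hxc)
  rw [sum_mul_eq_lagrangian (l := l) (c := c) (μ := μ) (C := C) hx1, add_eq_right,
    add_eq_zero_iff_of_nonneg (sum_nonneg h1) h2, sum_eq_zero_iff_of_nonneg h1,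
    mul_eq_zero, sub_eq_zero, or_iff_right hl.ne', and_comm]
  simp only [mem_univ, true_implies, mul_eq_zero, sub_eq_zero, eq_comm (a := C)]
  exact and_congr_right fun _ => forall_congr' fun i => or_iff_not_imp_right

end WeakDuality

section TwoPoint

variable {ι : Type*} [DecidableEq ι] {a b j : ι} {t : ℝ}

noncomputable def twoPoint (a b : ι) (t : ℝ) : ι → ℝ :=
  fun j => if j = a then t else if j = b then 1 - t else 0

theorem twoPoint_nonneg (h0 : 0 ≤ t) (h1 : t ≤ 1) (j : ι) : 0 ≤ twoPoint a b t j := by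
  unfold twoPoint
  split_ifs <;> linarith

theorem twoPoint_of_ne (hja : j ≠ a) (hjb : j ≠ b) : twoPoint a b t j = 0 := by
  simp [twoPoint, hja, hjb]

theorem eq_or_eq_of_twoPoint_ne_zero (h : twoPoint a b t j ≠ 0) : j = a ∨ j = b := by
  by_contra! hj
  exact h (twoPoint_of_ne hj.1 hj.2)

variable [Fintype ι]

theorem sum_mul_twoPoint (hab : a ≠ b) (c : ι → ℝ) :
    ∑ j, c j * twoPoint a b t j = t * c a + (1 - t) * c b := by
  rw [Fintype.sum_eq_add a b hab fun j hj => by rw [twoPoint_of_ne hj.1 hj.2, mul_zero]]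
  simp [twoPoint, hab.symm, mul_comm]

theorem sum_twoPoint (hab : a ≠ b) : ∑ j, twoPoint a b t j = 1 := by
  simpa using sum_mul_twoPoint (t := t) hab fun _ => 1

theorem eq_twoPoint {c x : ι → ℝ} (hab : a ≠ b) (hc : c a ≠ c b)
    (hx : ∀ j, x j ≠ 0 → j = a ∨ j = b) (hx1 : ∑ j, x j = 1)
    (hxc : ∑ j, c j * x j = t * c a + (1 - t) * c b) : x = twoPoint a b t := by
  have hx0 : ∀ j, j ≠ a ∧ j ≠ b → x j = 0 := fun j hj =>
    by_contra fun h => (hx j h).elim hj.1 hj.2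
  rw [Fintype.sum_eq_add a b hab hx0] at hx1
  rw [Fintype.sum_eq_add a b hab fun j hj => by rw [hx0 j hj, mul_zero]] at hxc
  have hxa : x a = t := by
    have : (c a - c b) * (x a - t) = 0 := by linear_combination hxc - c b * hx1
    linarith [(mul_eq_zero.1 this).resolve_left (sub_ne_zero.2 hc)]
  funext j
  by_cases hja : j = a
  · simp [twoPoint, hja, hxa]
  by_cases hjb : j = b
  · rw [hjb, twoPoint, if_neg hab.symm, if_pos rfl]
    linarith
  · rw [hx0 j ⟨hja, hjb⟩, twoPoint_of_ne hja hjb]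

end TwoPoint

theorem unique_min_transmission_on_simplex
    (n : ℕ) (β ctil : Fin n → ℝ)
    (hβ : StrictMono β) (hc : StrictAnti ctil)
    (hmarg : ∀ i : ℕ, ∀ h2 : i + 2 < n,
      (ctil ⟨i, by omega⟩ - ctil ⟨i + 1, by omega⟩) /
        (β ⟨i + 1, by omega⟩ - β ⟨i, by omega⟩) >
      (ctil ⟨i + 1, by omega⟩ - ctil ⟨i + 2, h2⟩) /
        (β ⟨i + 2, h2⟩ - β ⟨i + 1, by omega⟩))
    (istar : ℕ) (histar : istar + 1 < n) (cstar : ℝ)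
    (hcl : ctil ⟨istar + 1, histar⟩ < cstar)
    (hcu : cstar < ctil ⟨istar, by omega⟩)
    (xstar : Fin n → ℝ)
    (hxstar : xstar = fun j =>
      if j = (⟨istar, by omega⟩ : Fin n) then
        (cstar - ctil ⟨istar + 1, histar⟩) /
          (ctil ⟨istar, by omega⟩ - ctil ⟨istar + 1, histar⟩)
      else if j = (⟨istar + 1, histar⟩ : Fin n) then
        1 - (cstar - ctil ⟨istar + 1, histar⟩) /
          (ctil ⟨istar, by omega⟩ - ctil ⟨istar + 1, histar⟩)
      else 0) :
    ((∀ i, 0 ≤ xstar i) ∧ (∑ i, xstar i) = 1 ∧ (∑ i, ctil i * xstar i) ≤ cstar) ∧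
    ∀ x : Fin n → ℝ, (∀ i, 0 ≤ x i) → (∑ i, x i) = 1 →
      (∑ i, ctil i * x i) ≤ cstar → x ≠ xstar →
      (∑ i, β i * xstar i) < (∑ i, β i * x i) := by
  obtain ⟨m, rfl⟩ : ∃ m, n = m + 1 := ⟨n - 1, by omega⟩
  set a : Fin m := ⟨istar, by omega⟩
  replace hcl : ctil a.succ < cstar := hcl
  replace hcu : cstar < ctil a.castSucc := hcu
  have hab : a.castSucc ≠ a.succ := a.castSucc_lt_succ.ne
  have hslope : StrictAnti (marginalCost β ctil) :=
    Fin.strictAnti_of_val_succ_lt fun i hi => hmarg i (by omega)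
  set l := (marginalCost β ctil a)⁻¹
  have hl : 0 < l := inv_pos.2 (marginalCost_pos hβ hc a)
  have hLmin := lagrangian_castSucc_le hβ hc hslope a
  have hLmin_iff := lagrangian_eq_castSucc_iff hβ hc hslope a
  set t := (cstar - ctil a.succ) / (ctil a.castSucc - ctil a.succ)
  have htc : t * ctil a.castSucc + (1 - t) * ctil a.succ = cstar := by
    linear_combination div_mul_cancel₀ (cstar - ctil a.succ) (sub_pos.2 (hcl.trans hcu)).ne'
  replace hxstar : xstar = twoPoint a.castSucc a.succ t := hxstar
  have hx0 : ∀ j, 0 ≤ xstar j := hxstar ▸ twoPoint_nonneg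
    (div_nonneg (by linarith) (by linarith)) (div_le_one_of_le₀ (by linarith) (by linarith))
  have hx1 : ∑ j, xstar j = 1 := hxstar ▸ sum_twoPoint hab
  have hxc : ∑ j, ctil j * xstar j = cstar := hxstar ▸ (sum_mul_twoPoint hab ctil).trans htc
  have hopt : ∑ j, β j * xstar j = lagrangian β ctil l a.castSucc - l * cstar :=
    (sum_mul_eq_sub_mul_iff hl hLmin hx0 hx1 hxc.le).2
      ⟨hxc, fun j hj => (hLmin_iff j).2 (eq_or_eq_of_twoPoint_ne_zero (hxstar ▸ hj))⟩
  refine ⟨⟨hx0, hx1, hxc.le⟩, fun x hx0 hx1 hxc hne => ?_⟩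
  refine hopt ▸ (sub_mul_le_sum_mul hl.le hLmin hx0 hx1 hxc).lt_of_ne fun h => hne ?_
  obtain ⟨hxc', hsupp⟩ := (sum_mul_eq_sub_mul_iff hl hLmin hx0 hx1 hxc).1 h.symm
  exact hxstar ▸ eq_twoPoint hab (hc a.castSucc_lt_succ).ne'
    (fun j hj => (hLmin_iff j).1 (hsupp j hj)) hx1 (hxc'.trans htc.symm)
end

section
/- Let β ∈ [β₁, βₙ] with β > σ > δ > 0, ω > δ, γ > 0. Define Î_β = (b_β − √Δ_β)/(2δ(β−δ)) with b_β = γβ + ω(β−δ) + δ(β−σ), Δ_β = b_β² − 4δω(β−δ)(β−σ). Then Î_β ≥ Δ*/(2δ(βₙ−δ)) > 0, where Δ* = b* − √((b*)² − 4δω(β₁−δ)(β₁−σ)) and b* = γβₙ + ω(βₙ−δ) + δ(βₙ−σ); consequently ln Î_β is uniformly bounded over β ∈ [β₁, βₙ]. -/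
/-!
Î_β is the smaller root `(b - √(b² - c)) / (2δ(β - δ))` of `δ(β - δ) x² - b x + ω(β - σ)`, and
`b - √(b² - c)` is increasing in `c` and decreasing in `b` (it equals `c / (b + √(b² - c))`).
On `[β₁, βₙ]` the coefficient `b_β` is largest at `βₙ` and `c_β = 4δω(β - δ)(β - σ)` is
smallest at `β₁`, which gives the lower bound `Δ*`; it is positive because `c_{β₁} > 0`.
Together with the trivial upper bound `b_{βₙ} / (2δ(β₁ - δ))` this traps Î_β in a compact
subinterval of `(0, ∞)`, on which `log` is bounded.
-/

open Real

theorem sub_sqrt_sq_sub_le_of_le {a b c : ℝ} (hc : 0 ≤ c) (hca : c ≤ a ^ 2) (ha : 0 ≤ a)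
    (hab : a ≤ b) : b - √(b ^ 2 - c) ≤ a - √(a ^ 2 - c) := by
  have hs := sq_sqrt (by linarith : 0 ≤ a ^ 2 - c)
  have ht := sq_sqrt (by nlinarith : 0 ≤ b ^ 2 - c)
  set s := √(a ^ 2 - c)
  set t := √(b ^ 2 - c)
  have hs0 : 0 ≤ s := sqrt_nonneg _
  have ht0 : 0 ≤ t := sqrt_nonneg _
  have hsa : s ≤ a := by nlinarith
  rcases le_or_gt (b - a + s) 0 with h | h
  · linarith
  · nlinarith [mul_nonneg (sub_nonneg.2 hab) (sub_nonneg.2 hsa)]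

theorem sub_sqrt_sq_sub_pos {b c : ℝ} (hc : 0 < c) (hb : 0 < b) : 0 < b - √(b ^ 2 - c) := by
  have : √(b ^ 2 - c) < b := (sqrt_lt' hb).2 (by linarith)
  linarith

theorem abs_log_le_max_of_mem_Icc {L U x : ℝ} (hL : 0 < L) (hx : x ∈ Set.Icc L U) :
    |log x| ≤ max |log L| |log U| :=
  abs_le_max_abs_abs (log_le_log hL hx.1) (log_le_log (hL.trans_le hx.1) hx.2)

section Endemic

variable (σ δ ω γ : ℝ)

def endemicB (β : ℝ) : ℝ := γ * β + ω * (β - δ) + δ * (β - σ)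

def endemicC (β : ℝ) : ℝ := 4 * δ * ω * (β - δ) * (β - σ)

variable {σ δ ω γ}

theorem endemicB_mono (h : 0 ≤ γ + ω + δ) {β β' : ℝ} (hββ' : β ≤ β') :
    endemicB σ δ ω γ β ≤ endemicB σ δ ω γ β' := by
  unfold endemicB
  nlinarith [mul_nonneg h (sub_nonneg.2 hββ')]

theorem endemicB_pos (hγ : 0 < γ) (hω : 0 ≤ ω) (hδ : 0 ≤ δ) {β : ℝ} (hδβ : δ < β)
    (hσβ : σ ≤ β) : 0 < endemicB σ δ ω γ β := by
  unfold endemicB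
  have : 0 < γ * β := mul_pos hγ (by linarith)
  nlinarith [mul_nonneg hω (sub_nonneg.2 hδβ.le), mul_nonneg hδ (sub_nonneg.2 hσβ)]

theorem endemicC_pos (hδ : 0 < δ) (hω : 0 < ω) {β : ℝ} (hδβ : δ < β) (hσβ : σ < β) :
    0 < endemicC σ δ ω β := by
  unfold endemicC
  have := sub_pos.2 hδβ
  have := sub_pos.2 hσβ
  positivity

theorem endemicC_mono (hδ : 0 ≤ δ) (hω : 0 ≤ ω) {β β' : ℝ} (hδβ : δ ≤ β) (hσβ : σ ≤ β)
    (hββ' : β ≤ β') : endemicC σ δ ω β ≤ endemicC σ δ ω β' := by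
  unfold endemicC
  nlinarith [mul_nonneg (mul_nonneg hδ hω)
    (mul_nonneg (sub_nonneg.2 hββ') (by linarith : 0 ≤ β' + β - δ - σ))]

-- AM-GM on `ω(β - δ)` and `δ(β - σ)`.
theorem endemicC_le_endemicB_sq (hγ : 0 ≤ γ) (hω : 0 ≤ ω) (hδ : 0 ≤ δ) {β : ℝ} (hδβ : δ ≤ β)
    (hσβ : σ ≤ β) : endemicC σ δ ω β ≤ endemicB σ δ ω γ β ^ 2 := by
  unfold endemicB endemicC
  have hx := mul_nonneg hω (sub_nonneg.2 hδβ)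
  have hy := mul_nonneg hδ (sub_nonneg.2 hσβ)
  have hz := mul_nonneg hγ (hδ.trans hδβ)
  nlinarith [sq_nonneg (ω * (β - δ) - δ * (β - σ)), mul_nonneg hz (add_nonneg hx hy)]

variable (hσδ : δ < σ) (hδ : 0 < δ) (hω : 0 < ω) (hγ : 0 < γ) {β₁ βₙ : ℝ} (hβ₁ : σ < β₁)
include hσδ hδ hω hγ hβ₁

theorem endemic_numerator_lower_bound {β : ℝ} (hβ : β ∈ Set.Icc β₁ βₙ) :
    endemicB σ δ ω γ βₙ - √(endemicB σ δ ω γ βₙ ^ 2 - endemicC σ δ ω β₁) ≤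
      endemicB σ δ ω γ β - √(endemicB σ δ ω γ β ^ 2 - endemicC σ δ ω β) := by
  have hσβ : σ < β := hβ₁.trans_le hβ.1
  have hC₁ : endemicC σ δ ω β₁ ≤ endemicC σ δ ω β :=
    endemicC_mono hδ.le hω.le (by linarith) hβ₁.le hβ.1
  calc _ ≤ endemicB σ δ ω γ β - √(endemicB σ δ ω γ β ^ 2 - endemicC σ δ ω β₁) :=
        sub_sqrt_sq_sub_le_of_le (endemicC_pos hδ hω (by linarith) hβ₁).le
          (hC₁.trans (endemicC_le_endemicB_sq hγ.le hω.le hδ.le (by linarith) hσβ.le))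
          (endemicB_pos hγ hω.le hδ.le (by linarith) hσβ.le).le
          (endemicB_mono (by linarith) hβ.2)
    _ ≤ _ := by gcongr

theorem endemic_numerator_lower_bound_pos (hβ₁ₙ : β₁ ≤ βₙ) :
    0 < endemicB σ δ ω γ βₙ - √(endemicB σ δ ω γ βₙ ^ 2 - endemicC σ δ ω β₁) :=
  sub_sqrt_sq_sub_pos (endemicC_pos hδ hω (by linarith) hβ₁)
    (endemicB_pos hγ hω.le hδ.le (by linarith) (by linarith))

end Endemic

theorem endemic_fraction_uniform_lower_bound
    (σ δ ω γ β1 βn : ℝ)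
    (hσδ : σ > δ) (hδ : δ > 0) (hωδ : ω > δ) (hγ : γ > 0)
    (hβ1 : β1 > σ) (hβ1n : β1 ≤ βn)
    (Ihat : ℝ → ℝ)
    (hIhat : Ihat = fun b =>
      ((γ * b + ω * (b - δ) + δ * (b - σ))
        - Real.sqrt ((γ * b + ω * (b - δ) + δ * (b - σ)) ^ 2
            - 4 * δ * ω * (b - δ) * (b - σ))) / (2 * δ * (b - δ)))
    (Δstar : ℝ)
    (hΔstar : Δstar =
      (γ * βn + ω * (βn - δ) + δ * (βn - σ))
        - Real.sqrt ((γ * βn + ω * (βn - δ) + δ * (βn - σ)) ^ 2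
            - 4 * δ * ω * (β1 - δ) * (β1 - σ))) :
    (∀ β ∈ Set.Icc β1 βn, Ihat β ≥ Δstar / (2 * δ * (βn - δ))) ∧
    Δstar / (2 * δ * (βn - δ)) > 0 ∧
    ∃ C : ℝ, ∀ β ∈ Set.Icc β1 βn, |Real.log (Ihat β)| ≤ C := by
  have hω : 0 < ω := hδ.trans hωδ
  have hIhat' : ∀ β, Ihat β = (endemicB σ δ ω γ β - √(endemicB σ δ ω γ β ^ 2
      - endemicC σ δ ω β)) / (2 * δ * (β - δ)) := fun β => by subst hIhat; rfl
  have hΔpos : 0 < Δstar := hΔstar ▸ endemic_numerator_lower_bound_pos hσδ hδ hω hγ hβ1 hβ1n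
  have hlower : ∀ β ∈ Set.Icc β1 βn, Δstar / (2 * δ * (βn - δ)) ≤ Ihat β := fun β hβ => by
    have hnum : Δstar ≤ _ := hΔstar ▸ endemic_numerator_lower_bound hσδ hδ hω hγ hβ1 hβ
    rw [hIhat']
    exact div_le_div₀ (hΔpos.le.trans hnum) hnum (by nlinarith [hβ.1]) (by nlinarith [hβ.2])
  have hupper : ∀ β ∈ Set.Icc β1 βn,
      Ihat β ≤ endemicB σ δ ω γ βn / (2 * δ * (β1 - δ)) := fun β hβ => by
    rw [hIhat']
    exact div_le_div₀ (endemicB_pos hγ hω.le hδ.le (by linarith) (by linarith)).le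
      ((sub_le_self _ (sqrt_nonneg _)).trans (endemicB_mono (by linarith) hβ.2))
      (by nlinarith) (by nlinarith [hβ.1])
  have hLpos : 0 < Δstar / (2 * δ * (βn - δ)) := div_pos hΔpos (by nlinarith)
  exact ⟨hlower, hLpos, _, fun β hβ => abs_log_le_max_of_mem_Icc hLpos ⟨hlower β hβ, hupper β hβ⟩⟩
end

section
/- Let 𝒯 : 𝕏 × ℝⁿ → [0, T̄]^{n×n} be an impartial pairwise comparison protocol, i.e., 𝒯_{ij}(x,p) = φ_j([p_j − p_i]₊) for maps φ_j : ℝ_{≥0} → [0,T̄] with φ_j(0)=0 and φ_j(ν)>0 for ν>0. Then the mean dynamics vector field 𝒱_i(x,p) = Σ_{j≠i} x_j 𝒯_{ji}(x,p) − Σ_{j≠i} x_i 𝒯_{ij}(x,p) satisfies Nash stationarity: 𝒱(x,p) = 0 if and only if x ∈ argmax_{y ∈ 𝕏} p'y. -/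
/-!
Mass only ever flows from a strategy to a strictly better one, at a positive rate. If the
support of `x` consists of maximizers of `p`, nothing flows in or out of any support point.
Conversely, at a support point `i₀` of minimal payoff nothing flows in, so if some strategy
beats `p i₀` the net flow at `i₀` is strictly negative. Finally, on the simplex `p ⬝ y` is
maximal exactly when `y` is supported on the maximizers of `p`.
-/

open Finset

section SwitchRate

variable {r : ℝ → ℝ}

lemma rate_nonneg (hzero : r 0 = 0) (hpos : ∀ ν, 0 < ν → 0 < r ν) {ν : ℝ} (hν : 0 ≤ ν) :
    0 ≤ r ν := by
  rcases hν.eq_or_lt with rfl | h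
  · exact hzero.ge
  · exact (hpos ν h).le

lemma rate_max_sub_eq_zero (hzero : r 0 = 0) {a b : ℝ} (h : a ≤ b) : r (max (a - b) 0) = 0 := by
  rw [max_eq_right (sub_nonpos.2 h), hzero]

lemma rate_max_sub_pos (hpos : ∀ ν, 0 < ν → 0 < r ν) {a b : ℝ} (h : a < b) :
    0 < r (max (b - a) 0) :=
  hpos _ (lt_max_of_lt_left (sub_pos.2 h))

end SwitchRate

section BestResponse

variable {ι : Type*} [Fintype ι] {x y p : ι → ℝ}

def SupportedOnArgmax (x p : ι → ℝ) : Prop :=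
  ∀ i, 0 < x i → ∀ j, p j ≤ p i

lemma sum_mul_le_of_le {M : ℝ} (hy0 : ∀ i, 0 ≤ y i) (hy1 : ∑ i, y i = 1) (hM : ∀ i, p i ≤ M) :
    ∑ i, p i * y i ≤ M :=
  calc ∑ i, p i * y i ≤ ∑ i, M * y i :=
        sum_le_sum fun i _ ↦ mul_le_mul_of_nonneg_right (hM i) (hy0 i)
    _ = M := by rw [← mul_sum, hy1, mul_one]

lemma sum_mul_eq_of_supportedOnArgmax {k : ι} (hx0 : ∀ i, 0 ≤ x i) (hx1 : ∑ i, x i = 1)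
    (hk : ∀ i, p i ≤ p k) (hx : SupportedOnArgmax x p) : ∑ i, p i * x i = p k := by
  calc ∑ i, p i * x i = ∑ i, p k * x i := by
        refine sum_congr rfl fun i _ ↦ ?_
        rcases (hx0 i).eq_or_lt with h | h
        · simp [← h]
        · rw [le_antisymm (hk i) (hx i h k)]
    _ = p k := by rw [← mul_sum, hx1, mul_one]

lemma supportedOnArgmax_of_le_sum_mul {k : ι} (hx0 : ∀ i, 0 ≤ x i) (hx1 : ∑ i, x i = 1)
    (hk : ∀ i, p i ≤ p k) (h : p k ≤ ∑ i, p i * x i) : SupportedOnArgmax x p := by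
  have hgap : ∑ i, (p k - p i) * x i = 0 := by
    refine le_antisymm ?_ (sum_nonneg fun i _ ↦ mul_nonneg (sub_nonneg.2 (hk i)) (hx0 i))
    simp only [sub_mul, sum_sub_distrib, ← mul_sum, hx1, mul_one]
    linarith
  intro i hi j
  have hterm := (sum_eq_zero_iff_of_nonneg fun i _ ↦
    mul_nonneg (sub_nonneg.2 (hk i)) (hx0 i)).1 hgap i (mem_univ i)
  have hpi : p k = p i := by
    rcases mul_eq_zero.1 hterm with h | h
    · linarith
    · exact absurd h hi.ne'
  exact hpi ▸ hk j

theorem isBestResponse_iff_supportedOnArgmax (hx0 : ∀ i, 0 ≤ x i) (hx1 : ∑ i, x i = 1) :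
    (∀ y : ι → ℝ, (∀ i, 0 ≤ y i) → ∑ i, y i = 1 → ∑ i, p i * y i ≤ ∑ i, p i * x i) ↔
      SupportedOnArgmax x p := by
  have : Nonempty ι := by
    by_contra h
    simp [not_nonempty_iff.1 h] at hx1
  obtain ⟨k, hk⟩ := Finite.exists_max p
  constructor
  · intro hbest
    refine supportedOnArgmax_of_le_sum_mul hx0 hx1 hk ?_
    classical
    simpa [Pi.single_apply] using
      hbest (Pi.single k 1) (fun i ↦ by by_cases h : i = k <;> simp [h]) (by simp)
  · intro hx y hy0 hy1
    rw [sum_mul_eq_of_supportedOnArgmax hx0 hx1 hk hx]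
    exact sum_mul_le_of_le hy0 hy1 hk

end BestResponse

section MeanDynamics

variable {ι : Type*} {φ : ι → ℝ → ℝ} {x p : ι → ℝ}

lemma mul_rate_eq_zero (hzero : ∀ j, φ j 0 = 0) {i j : ι} (hxi : 0 ≤ x i)
    (h : 0 < x i → p j ≤ p i) : x i * φ j (max (p j - p i) 0) = 0 := by
  rcases hxi.eq_or_lt with hi | hi
  · rw [← hi, zero_mul]
  · rw [rate_max_sub_eq_zero (hzero j) (h hi), mul_zero]

variable [Fintype ι]

/-- `x j * φ i [p i - p j]₊` is the mass switching from `j` to `i`. -/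
def meanDynamics (φ : ι → ℝ → ℝ) (x p : ι → ℝ) (i : ι) : ℝ :=
  (∑ j, x j * φ i (max (p i - p j) 0)) - (∑ j, x i * φ j (max (p j - p i) 0))

lemma meanDynamics_eq_zero_of_supportedOnArgmax (hzero : ∀ j, φ j 0 = 0) (hx0 : ∀ i, 0 ≤ x i)
    (hx : SupportedOnArgmax x p) (i : ι) : meanDynamics φ x p i = 0 := by
  have hflow : ∀ i j, x i * φ j (max (p j - p i) 0) = 0 :=
    fun i j ↦ mul_rate_eq_zero hzero (hx0 _) fun hi ↦ hx i hi j
  simp [meanDynamics, hflow]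

lemma supportedOnArgmax_of_meanDynamics_eq_zero (hzero : ∀ j, φ j 0 = 0)
    (hpos : ∀ j ν, 0 < ν → 0 < φ j ν) (hx0 : ∀ i, 0 ≤ x i)
    (hV : ∀ i, meanDynamics φ x p i = 0) : SupportedOnArgmax x p := by
  unfold SupportedOnArgmax
  by_contra! ⟨i, hi, j, hij⟩
  obtain ⟨i₀, hi₀, hmin⟩ := exists_min_image (univ.filter (0 < x ·)) p ⟨i, by simpa using hi⟩
  have hxi₀ : 0 < x i₀ := (mem_filter.1 hi₀).2
  have hinflow : ∑ k, x k * φ i₀ (max (p i₀ - p k) 0) = 0 :=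
    sum_eq_zero fun k _ ↦ mul_rate_eq_zero hzero (hx0 _) fun hk ↦ hmin k (by simpa using hk)
  have houtflow : 0 < ∑ k, x i₀ * φ k (max (p k - p i₀) 0) := by
    refine sum_pos' (fun k _ ↦ mul_nonneg (hx0 i₀) ?_) ⟨j, mem_univ j, ?_⟩
    · exact rate_nonneg (hzero k) (hpos k) (le_max_right _ _)
    · exact mul_pos hxi₀ (rate_max_sub_pos (hpos j) ((hmin i (by simpa using hi)).trans_lt hij))
  have hnet := hV i₀
  rw [meanDynamics, hinflow] at hnet
  linarith

end MeanDynamics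

theorem ipc_nash_stationarity_general
    (n : ℕ)
    (φ : Fin n → ℝ → ℝ)
    (hzero : ∀ j, φ j 0 = 0)
    (hpos : ∀ j ν, 0 < ν → 0 < φ j ν)
    (x p : Fin n → ℝ) (hx0 : ∀ i, 0 ≤ x i) (hx1 : (∑ i, x i) = 1) :
    (∀ i : Fin n,
        (∑ j, x j * φ i (max (p i - p j) 0))
          - (∑ j, x i * φ j (max (p j - p i) 0)) = 0)
    ↔ (∀ y : Fin n → ℝ, (∀ i, 0 ≤ y i) → (∑ i, y i) = 1 →
        (∑ i, p i * y i) ≤ (∑ i, p i * x i)) := by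
  change (∀ i, meanDynamics φ x p i = 0) ↔ _
  rw [isBestResponse_iff_supportedOnArgmax hx0 hx1]
  exact ⟨supportedOnArgmax_of_meanDynamics_eq_zero hzero hpos hx0,
    fun hx ↦ meanDynamics_eq_zero_of_supportedOnArgmax hzero hx0 hx⟩

theorem ipc_nash_stationarity
    (n : ℕ) (Tbar : ℝ) (hT : 0 < Tbar)
    (φ : Fin n → ℝ → ℝ)
    (hrange : ∀ j ν, 0 ≤ ν → φ j ν ∈ Set.Icc (0 : ℝ) Tbar)
    (hzero : ∀ j, φ j 0 = 0)
    (hpos : ∀ j ν, 0 < ν → 0 < φ j ν)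
    (x p : Fin n → ℝ) (hx0 : ∀ i, 0 ≤ x i) (hx1 : (∑ i, x i) = 1) :
    (∀ i : Fin n,
        (∑ j, x j * φ i (max (p i - p j) 0))
          - (∑ j, x i * φ j (max (p j - p i) 0)) = 0)
    ↔ (∀ y : Fin n → ℝ, (∀ i, 0 ≤ y i) → (∑ i, y i) = 1 →
        (∑ i, p i * y i) ≤ (∑ i, p i * x i)) :=
  ipc_nash_stationarity_general n φ hzero hpos x p hx0 hx1
end
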